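/- Let κ = 8, ν ≥ 0, 0 < x < y, and consider h = −1/8, a = (ν+2)/8, b = (ν+2)(ν−2)/32. Let F(z) = ₂F₁((2ν+4)/8, 1/2, (2ν+8)/8; z) and G(z) = ₂F₁(1/2, 1/2, 1; z). Then the ratio R(z, p) = p^{ν²/32} · z^{ν/8} · F(z)/G(z) is uniformly bounded for z ∈ [0,1) and 0 < p ≤ (y−x)^{−2}; in particular z ↦ F(z)/G(z) extends to a bounded function on [0,1). -/
import Mathlib

open Real Filter Set Topology

/-- Rising factorial (Pochhammer symbol) `(x)_n`. -/
noncomputable def poch (x : ℝ) (n : ℕ) : ℝ := (ascPochhammer ℝ n).eval x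

/-- Gauss hypergeometric series `₂F₁(A,B,C;z)`. -/
noncomputable def hyp (A B C z : ℝ) : ℝ :=
  ∑' n : ℕ, poch A n * poch B n / (poch C n * (n.factorial : ℝ)) * z ^ n

lemma poch_zero (x : ℝ) : poch x 0 = 1 := by simp [poch]

lemma poch_succ (x : ℝ) (n : ℕ) : poch x (n + 1) = poch x n * (x + n) :=
  ascPochhammer_succ_eval n x

lemma poch_pos {x : ℝ} (hx : 0 < x) (n : ℕ) : 0 < poch x n :=
  ascPochhammer_pos n x hx

lemma poch_one (n : ℕ) : poch 1 n = (n.factorial : ℝ) := by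
  simp [poch]

lemma poch_mono {x y : ℝ} (hx : 0 < x) (hxy : x ≤ y) (n : ℕ) : poch x n ≤ poch y n := by
  induction n with
  | zero => simp [poch_zero]
  | succ n ih =>
    rw [poch_succ, poch_succ]
    have h1 : (0:ℝ) ≤ x + n := by positivity
    exact mul_le_mul ih (by linarith) h1 (le_of_lt (poch_pos (by linarith) n))

/-- The key step inequality. -/
lemma step_ineq {A : ℝ} (hA : 1/2 ≤ A) (n : ℕ) :
    (A + n) * ((n:ℝ) + 1) ≤
      Real.exp (4 * ((A - 1/2)/2) / (((n:ℝ) + 1) * ((n:ℝ) + 2))) *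
        ((A + 1/2 + n) * (1/2 + n)) := by
  set d : ℝ := (A - 1/2)/2 with hd
  have hd0 : 0 ≤ d := by simp [hd]; linarith
  have hn0 : (0:ℝ) ≤ (n:ℝ) := Nat.cast_nonneg n
  set P : ℝ := (A + 1/2 + n) * (1/2 + n) with hP
  have hP0 : 0 < P := by
    apply mul_pos <;> [skip; skip] <;> nlinarith
  set v : ℝ := 4 * d / (((n:ℝ) + 1) * ((n:ℝ) + 2)) with hv
  have hden : (0:ℝ) < ((n:ℝ) + 1) * ((n:ℝ) + 2) := by positivity
  have hid : (A + n) * ((n:ℝ) + 1) = P + d := by rw [hP, hd]; ring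
  have hdvP : d ≤ v * P := by
    have h4P : ((n:ℝ) + 1) * ((n:ℝ) + 2) ≤ 4 * P := by rw [hP]; nlinarith
    rw [hv, div_mul_eq_mul_div, le_div_iff₀ hden]
    nlinarith [mul_le_mul_of_nonneg_left h4P hd0]
  have h1v : 1 + v ≤ Real.exp v := by linarith [Real.add_one_le_exp v]
  calc (A + n) * ((n:ℝ) + 1) = P + d := hid
    _ ≤ P + v * P := by linarith
    _ = (1 + v) * P := by ring
    _ ≤ Real.exp v * P := mul_le_mul_of_nonneg_right h1v (le_of_lt hP0)

/-- Telescoping bound on the sum of `4d/((k+1)(k+2))`. -/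
lemma sum_bound {d : ℝ} (hd : 0 ≤ d) (n : ℕ) :
    ∑ k ∈ Finset.range n, 4 * d / (((k:ℝ) + 1) * ((k:ℝ) + 2)) ≤ 4 * d := by
  have key : ∀ k : ℕ, 4 * d / (((k:ℝ) + 1) * ((k:ℝ) + 2)) =
      4 * d * (1/((k:ℝ)+1)) - 4 * d * (1/(((k+1:ℕ):ℝ)+1)) := by
    intro k
    have h1 : ((k:ℝ)+1) ≠ 0 := by positivity
    have h2 : ((k:ℝ)+2) ≠ 0 := by positivity
    push_cast
    field_simp
    ring
  calc ∑ k ∈ Finset.range n, 4 * d / (((k:ℝ) + 1) * ((k:ℝ) + 2))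
      = ∑ k ∈ Finset.range n,
          ((fun m : ℕ => 4 * d * (1/((m:ℝ)+1))) k - (fun m : ℕ => 4 * d * (1/((m:ℝ)+1))) (k+1)) := by
        exact Finset.sum_congr rfl fun k _ => key k
    _ = 4 * d * (1/(((0:ℕ):ℝ)+1)) - 4 * d * (1/(((n:ℕ):ℝ)+1)) :=
        Finset.sum_range_sub' (fun m : ℕ => 4 * d * (1/((m:ℝ)+1))) n
    _ ≤ 4 * d := by
        have h : 0 ≤ 4 * d * (1/(((n:ℕ):ℝ)+1)) :=
          mul_nonneg (by linarith) (by positivity)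
        rw [one_div] at h
        norm_num
        linarith

/-- The key coefficient comparison. -/
lemma key_ineq {A : ℝ} (hA : 1/2 ≤ A) (n : ℕ) :
    poch A n * (n.factorial : ℝ) ≤
      Real.exp (4 * ((A - 1/2)/2)) * (poch (A + 1/2) n * poch (1/2) n) := by
  set d : ℝ := (A - 1/2)/2 with hd
  have hd0 : 0 ≤ d := by simp [hd]; linarith
  have main : ∀ n : ℕ, poch A n * (n.factorial : ℝ) ≤
      Real.exp (∑ k ∈ Finset.range n, 4 * d / (((k:ℝ) + 1) * ((k:ℝ) + 2))) *
        (poch (A + 1/2) n * poch (1/2) n) := by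
    intro n
    induction n with
    | zero => simp [poch_zero]
    | succ n ih =>
      rw [Finset.sum_range_succ, Real.exp_add, poch_succ, poch_succ, poch_succ]
      have hstep := step_ineq hA n
      have hL : (0:ℝ) ≤ (A + n) * ((n:ℝ) + 1) := by
        have : (0:ℝ) ≤ (n:ℝ) := Nat.cast_nonneg n
        nlinarith
      have hR : (0:ℝ) ≤ Real.exp (∑ k ∈ Finset.range n, 4 * d / (((k:ℝ) + 1) * ((k:ℝ) + 2))) *
          (poch (A + 1/2) n * poch (1/2) n) := by
        have := poch_pos (show (0:ℝ) < A + 1/2 by linarith) n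
        have := poch_pos (show (0:ℝ) < (1:ℝ)/2 by norm_num) n
        positivity
      have := mul_le_mul ih hstep hL hR
      calc poch A n * (A + n) * ((n+1).factorial : ℝ)
          = (poch A n * (n.factorial : ℝ)) * ((A + n) * ((n:ℝ) + 1)) := by
            rw [Nat.factorial_succ]; push_cast; ring
        _ ≤ (Real.exp (∑ k ∈ Finset.range n, 4 * d / (((k:ℝ) + 1) * ((k:ℝ) + 2))) *
              (poch (A + 1/2) n * poch (1/2) n)) *
            (Real.exp (4 * d / (((n:ℝ) + 1) * ((n:ℝ) + 2))) * ((A + 1/2 + n) * (1/2 + n))) := this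
        _ = Real.exp (∑ k ∈ Finset.range n, 4 * d / (((k:ℝ) + 1) * ((k:ℝ) + 2))) *
              Real.exp (4 * d / (((n:ℝ) + 1) * ((n:ℝ) + 2))) *
            (poch (A + 1/2) n * (A + 1/2 + n) * (poch (1/2) n * (1/2 + n))) := by ring
  refine le_trans (main n) ?_
  have hp : (0:ℝ) ≤ poch (A + 1/2) n * poch (1/2) n := by
    have := poch_pos (show (0:ℝ) < A + 1/2 by linarith) n
    have := poch_pos (show (0:ℝ) < (1:ℝ)/2 by norm_num) n
    positivity
  exact mul_le_mul_of_nonneg_right (Real.exp_le_exp.mpr (sum_bound hd0 n)) hp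

/-- The core ratio bound: for `z ∈ [0,1)`, `0 ≤ F/G ≤ exp(4d)`. -/
lemma hyp_ratio {A : ℝ} (hA : 1/2 ≤ A) {z : ℝ} (hz0 : 0 ≤ z) (hz1 : z < 1) :
    0 ≤ hyp A (1/2) (A + 1/2) z / hyp (1/2) (1/2) 1 z ∧
    hyp A (1/2) (A + 1/2) z / hyp (1/2) (1/2) 1 z ≤ Real.exp (4 * ((A - 1/2)/2)) := by
  set K : ℝ := Real.exp (4 * ((A - 1/2)/2)) with hK
  have hA0 : (0:ℝ) < A := by linarith
  have hC0 : (0:ℝ) < A + 1/2 := by linarith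
  have hB0 : (0:ℝ) < (1:ℝ)/2 := by norm_num
  set f : ℕ → ℝ := fun n => poch A n * poch (1/2) n / (poch (A+1/2) n * (n.factorial : ℝ)) * z ^ n
    with hf
  set g : ℕ → ℝ := fun n => poch (1/2) n * poch (1/2) n / (poch 1 n * (n.factorial : ℝ)) * z ^ n
    with hg
  have hfac : ∀ n : ℕ, (0:ℝ) < (n.factorial : ℝ) := fun n => by positivity
  have hf0 : ∀ n, 0 ≤ f n := by
    intro n
    have := poch_pos hA0 n; have := poch_pos hB0 n; have := poch_pos hC0 n; have := hfac n
    positivity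
  have hg0 : ∀ n, 0 ≤ g n := by
    intro n
    have := poch_pos hB0 n; have := poch_pos one_pos n; have := hfac n
    positivity
  have hfle : ∀ n, f n ≤ z ^ n := by
    intro n
    have h1 : poch A n ≤ poch (A+1/2) n := poch_mono hA0 (by linarith) n
    have h2 : poch (1/2) n ≤ (n.factorial : ℝ) := by
      rw [← poch_one n]; exact poch_mono hB0 (by norm_num) n
    have hc : poch A n * poch (1/2) n / (poch (A+1/2) n * (n.factorial : ℝ)) ≤ 1 := by
      rw [div_le_one (mul_pos (poch_pos hC0 n) (hfac n))]
      exact mul_le_mul h1 h2 (le_of_lt (poch_pos hB0 n)) (le_of_lt (poch_pos hC0 n))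
    calc f n ≤ 1 * z ^ n := mul_le_mul_of_nonneg_right hc (by positivity)
      _ = z ^ n := one_mul _
  have hgle : ∀ n, g n ≤ z ^ n := by
    intro n
    have h2 : poch (1/2) n ≤ poch 1 n := poch_mono hB0 (by norm_num) n
    have h3 : poch (1/2) n ≤ (n.factorial : ℝ) := by rw [← poch_one n]; exact h2
    have hc : poch (1/2) n * poch (1/2) n / (poch 1 n * (n.factorial : ℝ)) ≤ 1 := by
      rw [div_le_one (mul_pos (poch_pos one_pos n) (hfac n))]
      exact mul_le_mul h2 h3 (le_of_lt (poch_pos hB0 n)) (le_of_lt (poch_pos one_pos n))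
    calc g n ≤ 1 * z ^ n := mul_le_mul_of_nonneg_right hc (by positivity)
      _ = z ^ n := one_mul _
  have hgeo : Summable (fun n : ℕ => z ^ n) := summable_geometric_of_lt_one hz0 hz1
  have hfs : Summable f := Summable.of_nonneg_of_le hf0 hfle hgeo
  have hgs : Summable g := Summable.of_nonneg_of_le hg0 hgle hgeo
  have hFdef : hyp A (1/2) (A + 1/2) z = ∑' n, f n := rfl
  have hGdef : hyp (1/2) (1/2) 1 z = ∑' n, g n := rfl
  have hG1 : 1 ≤ hyp (1/2) (1/2) 1 z := by
    rw [hGdef]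
    have h0 : g 0 = 1 := by simp [hg, poch_zero]
    calc (1:ℝ) = g 0 := h0.symm
      _ ≤ ∑' n, g n := Summable.le_tsum hgs 0 (fun i _ => hg0 i)
  have hGpos : 0 < hyp (1/2) (1/2) 1 z := lt_of_lt_of_le one_pos hG1
  have hF0 : 0 ≤ hyp A (1/2) (A + 1/2) z := by
    rw [hFdef]; exact tsum_nonneg hf0
  have hterm : ∀ n, f n ≤ K * g n := by
    intro n
    have hpA := poch_pos hA0 n
    have hpB := poch_pos hB0 n
    have hpC := poch_pos hC0 n
    have hfacn := hfac n
    have hkey := key_ineq hA n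
    have hc : poch A n * poch (1/2) n / (poch (A+1/2) n * (n.factorial : ℝ)) ≤
        K * (poch (1/2) n * poch (1/2) n / (poch 1 n * (n.factorial : ℝ))) := by
      rw [poch_one, mul_div_assoc' K, div_le_div_iff₀ (by positivity) (by positivity)]
      have h2 := mul_le_mul_of_nonneg_right hkey
        (le_of_lt (mul_pos hpB hfacn))
      calc poch A n * poch (1/2) n * ((n.factorial : ℝ) * (n.factorial : ℝ))
          = poch A n * (n.factorial : ℝ) * (poch (1/2) n * (n.factorial : ℝ)) := by ring
        _ ≤ K * (poch (A+1/2) n * poch (1/2) n) * (poch (1/2) n * (n.factorial : ℝ)) := h2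
        _ = K * (poch (1/2) n * poch (1/2) n) * (poch (A+1/2) n * (n.factorial : ℝ)) := by ring
    calc f n ≤ (K * (poch (1/2) n * poch (1/2) n / (poch 1 n * (n.factorial : ℝ)))) * z ^ n :=
          mul_le_mul_of_nonneg_right hc (by positivity)
      _ = K * g n := by rw [hg]; ring
  have hFG : hyp A (1/2) (A + 1/2) z ≤ K * hyp (1/2) (1/2) 1 z := by
    rw [hFdef, hGdef, ← tsum_mul_left]
    exact Summable.tsum_le_tsum hterm hfs (hgs.mul_left K)
  constructor
  · positivity
  · rw [div_le_iff₀ hGpos]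
    exact hFG

/-- For `κ = 8`, `ν ≥ 0`, `0 < x < y`, with
`F(z) = ₂F₁((2ν+4)/8, 1/2, (2ν+8)/8; z)` and `G(z) = ₂F₁(1/2,1/2,1;z)`, the ratio
`R(z,p) = p^{ν²/32} z^{ν/8} F(z)/G(z)` is uniformly bounded for `z ∈ [0,1)` and
`0 < p ≤ (y−x)^{−2}`; in particular `z ↦ F(z)/G(z)` is bounded on `[0,1)`. -/
theorem hyp_ratio_bounded (ν x y : ℝ) (hν : 0 ≤ ν) (hx : 0 < x) (hxy : x < y) :
    (∃ M : ℝ, ∀ z ∈ Set.Ico (0 : ℝ) 1, ∀ p : ℝ, 0 < p → p ≤ (y - x) ^ (-2 : ℝ) →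
      |p ^ (ν ^ 2 / 32) * z ^ (ν / 8) *
        (hyp ((2 * ν + 4) / 8) (1 / 2) ((2 * ν + 8) / 8) z / hyp (1 / 2) (1 / 2) 1 z)| ≤ M) ∧
    (∃ M : ℝ, ∀ z ∈ Set.Ico (0 : ℝ) 1,
      |hyp ((2 * ν + 4) / 8) (1 / 2) ((2 * ν + 8) / 8) z / hyp (1 / 2) (1 / 2) 1 z| ≤ M) := by
  set A : ℝ := (2 * ν + 4) / 8 with hAdef
  have hA : 1/2 ≤ A := by rw [hAdef]; linarith
  have hC : (2 * ν + 8) / 8 = A + 1/2 := by rw [hAdef]; ring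
  set K : ℝ := Real.exp (4 * ((A - 1/2)/2)) with hKdef
  have hK0 : 0 < K := Real.exp_pos _
  have hratio : ∀ z ∈ Set.Ico (0:ℝ) 1,
      0 ≤ hyp A (1/2) ((2 * ν + 8) / 8) z / hyp (1/2) (1/2) 1 z ∧
      hyp A (1/2) ((2 * ν + 8) / 8) z / hyp (1/2) (1/2) 1 z ≤ K := by
    intro z hz
    rw [hC]
    exact hyp_ratio hA hz.1 hz.2
  constructor
  · refine ⟨max 1 (((y - x) ^ (-2:ℝ)) ^ (ν ^ 2 / 32)) * K, ?_⟩
    intro z hz p hp hpB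
    obtain ⟨hr0, hrK⟩ := hratio z hz
    have hp1 : (0:ℝ) ≤ p ^ (ν ^ 2 / 32) := Real.rpow_nonneg (le_of_lt hp) _
    have hz1 : (0:ℝ) ≤ z ^ (ν / 8) := Real.rpow_nonneg hz.1 _
    have habs : |p ^ (ν ^ 2 / 32) * z ^ (ν / 8) *
        (hyp A (1/2) ((2 * ν + 8) / 8) z / hyp (1/2) (1/2) 1 z)| =
        p ^ (ν ^ 2 / 32) * z ^ (ν / 8) *
        (hyp A (1/2) ((2 * ν + 8) / 8) z / hyp (1/2) (1/2) 1 z) := by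
      rw [abs_of_nonneg]; positivity
    rw [habs]
    have hpbound : p ^ (ν ^ 2 / 32) ≤ max 1 (((y - x) ^ (-2:ℝ)) ^ (ν ^ 2 / 32)) := by
      rcases le_or_gt p 1 with h | h
      · exact le_trans (Real.rpow_le_one (le_of_lt hp) h (by positivity)) (le_max_left _ _)
      · exact le_trans (Real.rpow_le_rpow (le_of_lt hp) hpB (by positivity)) (le_max_right _ _)
    have hzbound : z ^ (ν / 8) ≤ 1 := Real.rpow_le_one hz.1 (le_of_lt hz.2) (by positivity)
    calc p ^ (ν ^ 2 / 32) * z ^ (ν / 8) *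
          (hyp A (1/2) ((2 * ν + 8) / 8) z / hyp (1/2) (1/2) 1 z)
        ≤ max 1 (((y - x) ^ (-2:ℝ)) ^ (ν ^ 2 / 32)) * 1 * K := by
          apply mul_le_mul (mul_le_mul hpbound hzbound hz1 (le_trans zero_le_one (le_max_left _ _)))
            hrK hr0
          positivity
      _ = max 1 (((y - x) ^ (-2:ℝ)) ^ (ν ^ 2 / 32)) * K := by ring
  · refine ⟨K, ?_⟩
    intro z hz
    obtain ⟨hr0, hrK⟩ := hratio z hz
    rw [abs_of_nonneg hr0]
    exact hrK
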